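/- For x = 1 the compensating sequence equals h_1(n) = n·(p_o(n) - p_e(n)), where h_1(n) = ∑_{i ≥ 2, b_i = n} (-1)^{s(2i-1)} b_i with b_i = ∑_{j∈S_i} j for i - 1 = ∑_{j∈S_i} 2^{j-1}, and p_e(n), p_o(n) count partitions of n into an even, resp. odd, number of distinct parts. -/

import Mathlib

/-- Binary digit sum: number of ones in the binary expansion of `n`. -/
def binDigitSum (n : ℕ) : ℕ := (Nat.digits 2 n).sum

/-- `b_i = ∑_{j ∈ S_i} j` where `i - 1 = ∑_{j ∈ S_i} 2^{j-1}` is the binary expansion. -/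
def bNat (i : ℕ) : ℕ :=
  ∑ j ∈ Finset.Icc 1 i, if (i - 1).testBit (j - 1) then j else 0

/-- Partitions of `n` into distinct positive parts, as finite sets. -/
def distinctPartitions (n : ℕ) : Finset (Finset ℕ) :=
  (Finset.range (n + 1)).powerset.filter (fun S => 0 ∉ S ∧ S.sum id = n)

/-- Number of partitions of `n` into an even number of distinct parts. -/
def pe (n : ℕ) : ℕ := ((distinctPartitions n).filter (fun S => Even S.card)).card

/-- Number of partitions of `n` into an odd number of distinct parts. -/
def po (n : ℕ) : ℕ := ((distinctPartitions n).filter (fun S => Odd S.card)).card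

/-!
Writing `i - 1 = ∑_{j ∈ S_i} 2 ^ (j - 1)` identifies the indices `i ≥ 1` with the finite sets of
positive integers, and `b_i = n` says exactly that `S_i` is a partition of `n` into distinct parts
(which forces `2 ≤ i ≤ 2 ^ n` when `n ≥ 1`). Since `2 i - 1 = 2 (i - 1) + 1`, the binary expansion
of `2 i - 1` has one more digit `1` than that of `i - 1`, so `s(2 i - 1) = |S_i| + 1`. Each term
of the sum is therefore `(-1) ^ (|S| + 1) n` for a distinct partition `S` of `n`.
-/

open Finset

theorem binDigitSum_eq_length_bitIndices (m : ℕ) : binDigitSum m = m.bitIndices.length := by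
  induction m using Nat.binaryRec with
  | zero => simp [binDigitSum]
  | bit b m ih =>
    rcases eq_or_ne (Nat.bit b m) 0 with h | h
    · simp [h, binDigitSum]
    have hdigits : Nat.digits 2 (Nat.bit b m) = b.toNat :: Nat.digits 2 m := by
      rw [← Nat.digits_add 2 one_lt_two _ _ (Bool.toNat_lt b)]
      · cases b <;> simp [Nat.bit, add_comm]
      · cases b <;> simp_all
    rw [binDigitSum, hdigits, List.sum_cons, ← binDigitSum, ih]
    cases b
    · rw [Nat.bitIndices_bit_false]; simp
    · rw [Nat.bitIndices_bit_true]; simp [add_comm]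

theorem binDigitSum_two_mul_add_one (m : ℕ) : binDigitSum (2 * m + 1) = binDigitSum m + 1 := by
  simp [binDigitSum_eq_length_bitIndices]

/-- The set `S_i` of the paper. -/
def bitSet (i : ℕ) : Finset ℕ := (i - 1).bitIndices.toFinset.map (addRightEmbedding 1)

def bitSetIndex (S : Finset ℕ) : ℕ := ∑ j ∈ S, 2 ^ (j - 1) + 1

theorem mem_bitSet {i j : ℕ} : j ∈ bitSet i ↔ 1 ≤ j ∧ (i - 1).testBit (j - 1) := by
  simp only [bitSet, mem_map, List.mem_toFinset, Nat.mem_bitIndices, addRightEmbedding_apply]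
  constructor
  · rintro ⟨k, hk, rfl⟩
    simpa using hk
  · rintro ⟨hj, hbit⟩
    exact ⟨j - 1, hbit, by omega⟩

theorem zero_notMem_bitSet (i : ℕ) : 0 ∉ bitSet i := by simp [mem_bitSet]

theorem card_bitSet (i : ℕ) : #(bitSet i) = binDigitSum (i - 1) := by
  simp [bitSet, binDigitSum_eq_length_bitIndices, List.toFinset_card_of_nodup]

theorem bNat_eq_sum_bitSet (i : ℕ) : bNat i = ∑ j ∈ bitSet i, j := by
  rw [bNat, ← sum_filter]
  congr 1
  ext j
  simp only [mem_filter, mem_Icc, mem_bitSet]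
  constructor
  · exact fun h => ⟨h.1.1, h.2⟩
  · rintro ⟨hj, hbit⟩
    have := Nat.two_pow_le_of_mem_bitIndices (Nat.mem_bitIndices.mpr hbit)
    have := Nat.lt_two_pow_self (n := j - 1)
    exact ⟨⟨hj, by omega⟩, hbit⟩

theorem map_image_pred {S : Finset ℕ} (hS : 0 ∉ S) :
    (S.image (· - 1)).map (addRightEmbedding 1) = S := by
  ext j
  simp only [mem_map, mem_image, addRightEmbedding_apply]
  constructor
  · rintro ⟨_, ⟨k, hk, rfl⟩, rfl⟩
    rwa [Nat.sub_add_cancel (Nat.pos_of_ne_zero (ne_of_mem_of_not_mem hk hS))]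
  · intro hj
    exact ⟨j - 1, ⟨j, hj, rfl⟩,
      Nat.sub_add_cancel (Nat.pos_of_ne_zero (ne_of_mem_of_not_mem hj hS))⟩

theorem bitSetIndex_eq {S : Finset ℕ} (hS : 0 ∉ S) :
    bitSetIndex S = ∑ k ∈ S.image (· - 1), 2 ^ k + 1 := by
  conv_lhs => rw [← map_image_pred hS]
  simp [bitSetIndex]

theorem bitSet_bitSetIndex {S : Finset ℕ} (hS : 0 ∉ S) : bitSet (bitSetIndex S) = S := by
  rw [bitSetIndex_eq hS, bitSet, Nat.add_sub_cancel, Finset.toFinset_bitIndices_sum_two_pow,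
    map_image_pred hS]

theorem bitSetIndex_bitSet {i : ℕ} (hi : 1 ≤ i) : bitSetIndex (bitSet i) = i := by
  simp only [bitSetIndex, bitSet, sum_map, addRightEmbedding_apply, add_tsub_cancel_right,
    sum_toFinset_bitIndices_two_pow]
  omega

theorem binDigitSum_two_mul_sub_one {i : ℕ} (hi : 1 ≤ i) :
    binDigitSum (2 * i - 1) = #(bitSet i) + 1 := by
  rw [card_bitSet, ← binDigitSum_two_mul_add_one]
  congr 1
  omega

theorem mem_distinctPartitions {n : ℕ} {S : Finset ℕ} :
    S ∈ distinctPartitions n ↔ 0 ∉ S ∧ ∑ j ∈ S, j = n := by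
  simp only [distinctPartitions, mem_filter, mem_powerset, id, and_iff_right_iff_imp]
  rintro ⟨-, rfl⟩ j hj
  exact mem_range_succ_iff.mpr (single_le_sum (f := fun j => j) (fun _ _ => Nat.zero_le _) hj)

theorem bitSet_mem_distinctPartitions {i : ℕ} : bitSet i ∈ distinctPartitions (bNat i) :=
  mem_distinctPartitions.mpr ⟨zero_notMem_bitSet i, (bNat_eq_sum_bitSet i).symm⟩

theorem bNat_bitSetIndex {S : Finset ℕ} (hS : 0 ∉ S) :
    bNat (bitSetIndex S) = ∑ j ∈ S, j := by
  rw [bNat_eq_sum_bitSet, bitSet_bitSetIndex hS]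

theorem bitSetIndex_mem_Icc {n : ℕ} (hn : 1 ≤ n) {S : Finset ℕ}
    (hS : S ∈ distinctPartitions n) : bitSetIndex S ∈ Icc 2 (2 ^ n) := by
  have hlt : ∀ j ∈ S, j < n + 1 := fun j hj =>
    mem_range.mp (mem_powerset.mp (mem_filter.mp hS).1 hj)
  obtain ⟨h0, hsum⟩ := mem_distinctPartitions.mp hS
  have hne : S.Nonempty := nonempty_of_sum_ne_zero (f := fun j => j) (by omega)
  rw [mem_Icc, bitSetIndex_eq h0]
  constructor
  · have := sum_pos (fun k _ => Nat.two_pow_pos k) (hne.image (· - 1))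
    omega
  · have := Nat.geomSum_lt (le_refl 2) (s := S.image (· - 1)) (n := n) <| by
      simp only [mem_image]
      rintro _ ⟨j, hj, rfl⟩
      have := hlt j hj
      omega
    omega

theorem sum_filter_bNat_eq_sum_distinctPartitions {M : Type*} [AddCommMonoid M] {n : ℕ}
    (hn : 1 ≤ n) (g : Finset ℕ → M) :
    ∑ i ∈ (Icc 2 (2 ^ n)).filter (fun i => bNat i = n), g (bitSet i)
      = ∑ S ∈ distinctPartitions n, g S := by
  refine sum_nbij' bitSet bitSetIndex ?_ ?_ ?_ ?_ (fun _ _ => rfl)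
  · intro i hi
    rw [mem_filter] at hi
    exact hi.2 ▸ bitSet_mem_distinctPartitions
  · intro S hS
    have h0 := (mem_distinctPartitions.mp hS).1
    rw [mem_filter, bNat_bitSetIndex h0, (mem_distinctPartitions.mp hS).2]
    exact ⟨bitSetIndex_mem_Icc hn hS, rfl⟩
  · intro i hi
    rw [mem_filter, mem_Icc] at hi
    exact bitSetIndex_bitSet (by omega)
  · intro S hS
    exact bitSet_bitSetIndex (mem_distinctPartitions.mp hS).1

theorem sum_neg_one_pow_add_one {α : Type*} (s : Finset α) (f : α → ℕ) :
    ∑ x ∈ s, (-1 : ℤ) ^ (f x + 1)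
      = #(s.filter (fun x => Odd (f x))) - #(s.filter (fun x => Even (f x))) := by
  have hsign (k : ℕ) :
      (-1 : ℤ) ^ (k + 1) = (if Odd k then 1 else 0) - (if Even k then 1 else 0) := by
    rcases Nat.even_or_odd k with h | h
    · simp [h, h.add_one.neg_one_pow, Nat.not_odd_iff_even.mpr h]
    · simp [h, h.add_one.neg_one_pow, Nat.not_even_iff_odd.mpr h]
  simp only [hsign, sum_sub_distrib, sum_boole]

/-- For `x = 1`, the compensating sequence is
`h_1(n) = ∑_{i ≥ 2, b_i = n} (-1)^{s(2i-1)} b_i = n·(p_o(n) - p_e(n))`. -/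
theorem stmt_13 (n : ℕ) (hn : 1 ≤ n) :
    (∑ i ∈ Finset.Icc 2 (2 ^ n),
      if bNat i = n then (-1 : ℤ) ^ binDigitSum (2 * i - 1) * (bNat i : ℤ) else 0)
      = (n : ℤ) * ((po n : ℤ) - (pe n : ℤ)) := by
  rw [← sum_filter]
  calc _ = ∑ i ∈ (Icc 2 (2 ^ n)).filter (fun i => bNat i = n),
          (-1 : ℤ) ^ (#(bitSet i) + 1) * n :=
        sum_congr rfl fun i hi => by
          rw [mem_filter, mem_Icc] at hi
          rw [binDigitSum_two_mul_sub_one (by omega), hi.2]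
    _ = ∑ S ∈ distinctPartitions n, (-1 : ℤ) ^ (#S + 1) * n :=
        sum_filter_bNat_eq_sum_distinctPartitions hn fun S => (-1 : ℤ) ^ (#S + 1) * n
    _ = n * (po n - pe n) := by
        rw [← sum_mul, sum_neg_one_pow_add_one, po, pe, mul_comm]
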